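/- arXiv:1009.2677 — 2 statements merged into one kernel-verified Lean document; each statement's English description precedes it below -/
import Mathlib

section
/- Let V be a real inner product space of dimension 2n (n ≥ 2) with an orthogonal complex structure J, and let R be a curvature-like tensor on V satisfying R(x,y,z,u) = R(Jx,Jy,Jz,Ju) for all x, y, z, u. If R has constant antiholomorphic sectional curvature ν, then (n+1)S(x,y) − 3S'(x,y) = (((n+1)τ − 3τ')/(2n)) ⟨x,y⟩ for all x, y ∈ V. -/
open scoped RealInnerProductSpace

/-- A curvature-like tensor on a real inner product space `V`, presented as a
(4-fold) multilinear map via iterated linear maps: it is antisymmetric in the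
first two and in the last two arguments, symmetric under swapping the two
pairs, and satisfies the first Bianchi identity. -/
def IsCurvatureLike {V : Type*} [NormedAddCommGroup V] [InnerProductSpace ℝ V]
    (R : V →ₗ[ℝ] V →ₗ[ℝ] V →ₗ[ℝ] V →ₗ[ℝ] ℝ) : Prop :=
  (∀ x y z u : V, R x y z u = - R y x z u) ∧
  (∀ x y z u : V, R x y z u = - R x y u z) ∧
  (∀ x y z u : V, R x y z u = R z u x y) ∧
  (∀ x y z u : V, R x y z u + R y z x u + R z x y u = 0)

/-!
Fix a unit vector `x` and split traces along `span {x, Jx} ⊕ {x, Jx}ᗮ`. Writing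
`H(x) = R(x, Jx, Jx, x)`, the antiholomorphic condition gives `S(x, x) = (2n - 2) ν + H(x)`.
Applying it to the antiholomorphic pairs `(x ± Jy, Jx ± y)` and `(x ± y, Jx ∓ Jy)` and using
the Bianchi identity gives `6 R(x, y, Jy, Jx) = H(x) + H(y) - 2ν` for unit `y ⊥ x, Jx`; tracing
this over `{x, Jx}ᗮ` yields `6 S'(x, x) = (2n + 2) H(x) + τ - (2n + 2)(2n - 2) ν`. So `H` cancels
in `(n + 1) S - 3 S'`, which is constant on the unit sphere; `J`-invariance of `R` makes `S'`
symmetric, so polarization and a trace give the theorem.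
-/

section InnerProductSpace

variable {V : Type*} [NormedAddCommGroup V] [InnerProductSpace ℝ V] {ι : Type*} [Fintype ι]

theorem OrthonormalBasis.sum_inner_mul_apply (e : OrthonormalBasis ι ℝ V) (f : V →ₗ[ℝ] ℝ)
    (v : V) : ∑ i, ⟪v, e i⟫ * f (e i) = f v := by
  conv_rhs => rw [← e.sum_repr' v, map_sum]
  simp only [map_smul, smul_eq_mul, real_inner_comm]

/-- For orthonormal `x, x'` this is the orthogonal projection onto `{x, x'}ᗮ`. -/
noncomputable def projComplPair (x x' : V) : V →ₗ[ℝ] V :=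
  LinearMap.id - (innerₗ V x).smulRight x - (innerₗ V x').smulRight x'

@[simp]
theorem projComplPair_apply (x x' y : V) :
    projComplPair x x' y = y - ⟪x, y⟫ • x - ⟪x', y⟫ • x' := rfl

variable {x x' : V}

theorem inner_projComplPair_left (hx : ⟪x, x⟫ = 1) (hxx' : ⟪x, x'⟫ = 0) (y : V) :
    ⟪x, projComplPair x x' y⟫ = 0 := by
  simp only [projComplPair_apply, inner_sub_right, real_inner_smul_right, hx, hxx']
  ring

theorem inner_projComplPair_right (hx' : ⟪x', x'⟫ = 1) (hxx' : ⟪x, x'⟫ = 0) (y : V) :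
    ⟪x', projComplPair x x' y⟫ = 0 := by
  simp only [projComplPair_apply, inner_sub_right, real_inner_smul_right, hx', real_inner_comm x x',
    hxx']
  ring

theorem projComplPair_left (hx : ⟪x, x⟫ = 1) (hxx' : ⟪x, x'⟫ = 0) :
    projComplPair x x' x = 0 := by
  simp only [projComplPair_apply, hx, real_inner_comm x x', hxx', one_smul, zero_smul, sub_self]

theorem projComplPair_right (hx' : ⟪x', x'⟫ = 1) (hxx' : ⟪x, x'⟫ = 0) :
    projComplPair x x' x' = 0 := by
  simp only [projComplPair_apply, hx', hxx', one_smul, zero_smul, sub_zero, sub_self]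

theorem OrthonormalBasis.sum_apply_self_eq_sum_projComplPair (e : OrthonormalBasis ι ℝ V)
    (B : V →ₗ[ℝ] V →ₗ[ℝ] ℝ) (hx : ⟪x, x⟫ = 1) (hx' : ⟪x', x'⟫ = 1) (hxx' : ⟪x, x'⟫ = 0) :
    ∑ i, B (e i) (e i) =
      ∑ i, B (projComplPair x x' (e i)) (projComplPair x x' (e i)) + B x x + B x' x' := by
  have hsplit : ∀ y, B y y = B (projComplPair x x' y) (projComplPair x x' y)
      + (⟪x, y⟫ * B x y + ⟪x', y⟫ * B x' y)
      + (⟪x, y⟫ * (B.flip x ∘ₗ projComplPair x x') y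
        + ⟪x', y⟫ * (B.flip x' ∘ₗ projComplPair x x') y) := fun y => by
    have hy : y - projComplPair x x' y = ⟪x, y⟫ • x + ⟪x', y⟫ • x' := by
      simp only [projComplPair_apply]; abel
    have h : B y y = B (projComplPair x x' y) (projComplPair x x' y)
        + B (y - projComplPair x x' y) y + B (projComplPair x x' y) (y - projComplPair x x' y) := by
      simp only [map_sub, LinearMap.sub_apply]; ring
    rw [h, hy]
    simp only [map_add, map_smul, LinearMap.add_apply, LinearMap.smul_apply, smul_eq_mul,
      LinearMap.comp_apply, LinearMap.flip_apply]
  rw [Finset.sum_congr rfl fun i _ => hsplit (e i)]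
  simp only [Finset.sum_add_distrib, e.sum_inner_mul_apply]
  simp only [LinearMap.comp_apply, projComplPair_left hx hxx', projComplPair_right hx' hxx',
    map_zero]
  ring

theorem OrthonormalBasis.sum_inner_projComplPair_self (e : OrthonormalBasis ι ℝ V)
    (hx : ⟪x, x⟫ = 1) (hx' : ⟪x', x'⟫ = 1) (hxx' : ⟪x, x'⟫ = 0) :
    ∑ i, ⟪projComplPair x x' (e i), projComplPair x x' (e i)⟫ = Fintype.card ι - 2 := by
  have h := e.sum_apply_self_eq_sum_projComplPair (innerₗ V) hx hx' hxx'
  simp only [innerₗ_apply_apply, hx, hx', real_inner_self_eq_norm_sq, e.orthonormal.1,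
    one_pow, Finset.sum_const, Finset.card_univ, nsmul_eq_mul, mul_one] at h ⊢
  linarith

theorem apply_self_eq_of_norm_eq_one {B₁ B₂ : V →ₗ[ℝ] V →ₗ[ℝ] ℝ} (K : Submodule ℝ V)
    (h : ∀ u ∈ K, ‖u‖ = 1 → B₁ u u = B₂ u u) {w : V} (hw : w ∈ K) : B₁ w w = B₂ w w := by
  rcases eq_or_ne w 0 with rfl | hw0
  · simp
  set u := ‖w‖⁻¹ • w
  have hwu : w = ‖w‖ • u := (smul_inv_smul₀ (norm_ne_zero_iff.2 hw0) w).symm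
  have hu := h u (K.smul_mem _ hw) (norm_smul_inv_norm hw0)
  rw [hwu]
  simp only [map_smul, LinearMap.smul_apply, smul_eq_mul, hu]

theorem apply_eq_mul_inner_of_norm_eq_one (B : V →ₗ[ℝ] V →ₗ[ℝ] ℝ) (hB : ∀ x y, B x y = B y x)
    (c : ℝ) (h : ∀ u : V, ‖u‖ = 1 → B u u = c) (x y : V) : B x y = c * ⟪x, y⟫ := by
  have hdiag : ∀ v, B v v = (c • innerₗ V) v v := fun v =>
    apply_self_eq_of_norm_eq_one ⊤ (fun u _ hu => by simp [h u hu, hu])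
      Submodule.mem_top
  have hxy := hdiag (x + y)
  simp only [map_add, LinearMap.add_apply, LinearMap.smul_apply, innerₗ_apply_apply, smul_eq_mul,
    hdiag x, hdiag y, hB y x, real_inner_comm x y] at hxy ⊢
  linarith

end InnerProductSpace

section Curvature

variable {V : Type*} [NormedAddCommGroup V] [InnerProductSpace ℝ V]
  {R : V →ₗ[ℝ] V →ₗ[ℝ] V →ₗ[ℝ] V →ₗ[ℝ] ℝ}

theorem apply_sub_left (a b y z u : V) : R (a - b) y z u = R a y z u - R b y z u := by
  have h : R (a - b) + R b = R a := by rw [← map_add, sub_add_cancel]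
  rw [← h, LinearMap.add_apply, LinearMap.add_apply, LinearMap.add_apply, add_sub_cancel_right]

theorem IsCurvatureLike.antisymm_left (hR : IsCurvatureLike R) (a b c d : V) :
    R a b c d = -R b a c d :=
  hR.1 a b c d

theorem IsCurvatureLike.antisymm_right (hR : IsCurvatureLike R) (a b c d : V) :
    R a b c d = -R a b d c :=
  hR.2.1 a b c d

theorem IsCurvatureLike.pair_comm (hR : IsCurvatureLike R) (a b c d : V) :
    R a b c d = R c d a b :=
  hR.2.2.1 a b c d

theorem IsCurvatureLike.bianchi (hR : IsCurvatureLike R) (a b c d : V) :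
    R a b c d + R b c a d + R c a b d = 0 :=
  hR.2.2.2 a b c d

theorem IsCurvatureLike.apply_self_left (hR : IsCurvatureLike R) (a b c : V) : R a a b c = 0 := by
  linarith [hR.antisymm_left a a b c]

theorem IsCurvatureLike.apply_rev (hR : IsCurvatureLike R) (a b c d : V) :
    R a b c d = R d c b a := by
  linarith [hR.pair_comm a b c d, hR.antisymm_left c d a b, hR.antisymm_right d c a b]

theorem IsCurvatureLike.sectional_add_add_sectional_sub_sub (hR : IsCurvatureLike R)
    (a b c d : V) :
    R (a + b) (c + d) (c + d) (a + b) + R (a - b) (c - d) (c - d) (a - b) =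
      2 * (R a c c a + R a d d a + R b c c b + R b d d b) + 4 * (R a c d b + R a d c b) := by
  simp only [map_add, map_sub, apply_sub_left, LinearMap.add_apply, LinearMap.sub_apply]
  linear_combination 2 * hR.apply_rev b d c a + 2 * hR.apply_rev b c d a

end Curvature

section ComplexStructure

variable {V : Type*} [NormedAddCommGroup V] [InnerProductSpace ℝ V]

structure IsOrthogonalComplexStructure (J : V →ₗ[ℝ] V) : Prop where
  apply_apply : ∀ x, J (J x) = -x
  inner_apply_apply : ∀ x y, ⟪J x, J y⟫ = ⟪x, y⟫

variable {J : V →ₗ[ℝ] V}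

theorem IsOrthogonalComplexStructure.inner_apply_right (hJ : IsOrthogonalComplexStructure J)
    (x y : V) : ⟪x, J y⟫ = -⟪J x, y⟫ := by
  rw [← hJ.inner_apply_apply, hJ.apply_apply, inner_neg_right]

theorem IsOrthogonalComplexStructure.inner_apply_self (hJ : IsOrthogonalComplexStructure J)
    (x : V) : ⟪J x, x⟫ = 0 := by
  linarith [hJ.inner_apply_right x x, real_inner_comm x (J x)]

theorem IsOrthogonalComplexStructure.inner_self_apply (hJ : IsOrthogonalComplexStructure J)
    (x : V) : ⟪x, J x⟫ = 0 := by
  rw [real_inner_comm, hJ.inner_apply_self]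

end ComplexStructure

section AntiholomorphicCurvature

variable {V : Type*} [NormedAddCommGroup V] [InnerProductSpace ℝ V] {ι : Type*} [Fintype ι]
  {J : V →ₗ[ℝ] V} {R : V →ₗ[ℝ] V →ₗ[ℝ] V →ₗ[ℝ] V →ₗ[ℝ] ℝ} {ν : ℝ}

noncomputable def ricci (e : OrthonormalBasis ι ℝ V) (R : V →ₗ[ℝ] V →ₗ[ℝ] V →ₗ[ℝ] V →ₗ[ℝ] ℝ) :
    V →ₗ[ℝ] V →ₗ[ℝ] ℝ :=
  ∑ i, (R.flip (e i)).flip (e i)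

noncomputable def starRicci (e : OrthonormalBasis ι ℝ V) (J : V →ₗ[ℝ] V)
    (R : V →ₗ[ℝ] V →ₗ[ℝ] V →ₗ[ℝ] V →ₗ[ℝ] ℝ) : V →ₗ[ℝ] V →ₗ[ℝ] ℝ :=
  ∑ i, ((R.flip (e i)).flip (J (e i))).compl₂ J

theorem ricci_apply (e : OrthonormalBasis ι ℝ V) (x y : V) :
    ricci e R x y = ∑ i, R x (e i) (e i) y := by
  simp [ricci]

theorem starRicci_apply (e : OrthonormalBasis ι ℝ V) (x y : V) :
    starRicci e J R x y = ∑ i, R x (e i) (J (e i)) (J y) := by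
  simp [starRicci]

theorem ricci_comm (hR : IsCurvatureLike R) (e : OrthonormalBasis ι ℝ V) (x y : V) :
    ricci e R x y = ricci e R y x := by
  simp only [ricci_apply, hR.apply_rev x]

theorem starRicci_comm (hR : IsCurvatureLike R) (hJ : IsOrthogonalComplexStructure J)
    (hRJ : ∀ x y z u : V, R x y z u = R (J x) (J y) (J z) (J u))
    (e : OrthonormalBasis ι ℝ V) (x y : V) :
    starRicci e J R x y = starRicci e J R y x := by
  simp only [starRicci_apply]
  refine Finset.sum_congr rfl fun i _ => ?_
  rw [hRJ x, hJ.apply_apply, hJ.apply_apply]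
  simp only [map_neg, LinearMap.neg_apply, neg_neg]
  linarith [hR.pair_comm (J x) (J (e i)) (e i) y, hR.apply_rev (e i) y (J x) (J (e i)),
    hR.pair_comm (J (e i)) (J x) y (e i)]

def HasConstAntiholomorphicCurvature (J : V →ₗ[ℝ] V) (R : V →ₗ[ℝ] V →ₗ[ℝ] V →ₗ[ℝ] V →ₗ[ℝ] ℝ)
    (ν : ℝ) : Prop :=
  ∀ u v : V, ⟪u, v⟫ = 0 → ⟪v, J u⟫ = 0 → R u v v u = ν * (⟪u, u⟫ * ⟪v, v⟫)

theorem hasConstAntiholomorphicCurvature_of_norm_eq_one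
    (hν : ∀ x y : V, ‖x‖ = 1 → ‖y‖ = 1 → ⟪x, y⟫ = 0 → ⟪y, J x⟫ = 0 → R x y y x = ν) :
    HasConstAntiholomorphicCurvature J R ν := by
  intro u v huv hvJu
  rcases eq_or_ne u 0 with rfl | hu
  · simp
  rcases eq_or_ne v 0 with rfl | hv
  · simp
  have h := hν (‖u‖⁻¹ • u) (‖v‖⁻¹ • v) (norm_smul_inv_norm hu) (norm_smul_inv_norm hv)
    (by rw [real_inner_smul_left, real_inner_smul_right, huv]; ring)
    (by rw [map_smul, real_inner_smul_left, real_inner_smul_right, hvJu]; ring)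
  simp only [map_smul, LinearMap.smul_apply, smul_eq_mul] at h
  have hu' : ‖u‖ ≠ 0 := norm_ne_zero_iff.2 hu
  have hv' : ‖v‖ ≠ 0 := norm_ne_zero_iff.2 hv
  rw [real_inner_self_eq_norm_sq, real_inner_self_eq_norm_sq]
  field_simp at h
  linarith

theorem ricci_apply_self_of_inner_self_eq_one (hR : IsCurvatureLike R)
    (hJ : IsOrthogonalComplexStructure J) (hν : HasConstAntiholomorphicCurvature J R ν)
    (e : OrthonormalBasis ι ℝ V) {x : V} (hx : ⟪x, x⟫ = 1) :
    ricci e R x x = (Fintype.card ι - 2) * ν + R x (J x) (J x) x := by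
  have hJx : ⟪J x, J x⟫ = 1 := by rw [hJ.inner_apply_apply, hx]
  have hsplit := e.sum_apply_self_eq_sum_projComplPair ((R x).compr₂ (LinearMap.applyₗ x)) hx hJx
    (hJ.inner_self_apply x)
  have hcompl : ∀ i, R x (projComplPair x (J x) (e i)) (projComplPair x (J x) (e i)) x
      = ν * ⟪projComplPair x (J x) (e i), projComplPair x (J x) (e i)⟫ := fun i => by
    rw [hν _ _ (inner_projComplPair_left hx (hJ.inner_self_apply x) _), hx, one_mul]
    rw [real_inner_comm, inner_projComplPair_right hJx (hJ.inner_self_apply x)]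
  simp only [LinearMap.compr₂_apply, LinearMap.applyₗ_apply_apply, hcompl, ← Finset.mul_sum,
    e.sum_inner_projComplPair_self hx hJx (hJ.inner_self_apply x), hR.apply_self_left] at hsplit
  rw [ricci_apply, hsplit]
  ring

theorem two_mul_eq_holomorphic_add_holomorphic_add (hR : IsCurvatureLike R)
    (hJ : IsOrthogonalComplexStructure J) (hν : HasConstAntiholomorphicCurvature J R ν)
    {x y : V} (hx : ⟪x, x⟫ = 1) (hy : ⟪y, y⟫ = 1) (hxy : ⟪x, y⟫ = 0) (hJxy : ⟪J x, y⟫ = 0) :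
    2 * ν = R x (J x) (J x) x + R y (J y) (J y) y + 2 * R x (J x) y (J y)
      + 2 * R x y (J x) (J y) := by
  have hyx : ⟪y, x⟫ = 0 := by rw [real_inner_comm, hxy]
  have hyJx : ⟪y, J x⟫ = 0 := by rw [real_inner_comm, hJxy]
  have hxJy : ⟪x, J y⟫ = 0 := by rw [hJ.inner_apply_right, hJxy, neg_zero]
  have hJyx : ⟪J y, x⟫ = 0 := by rw [real_inner_comm, hxJy]
  have hsq : ∀ u v : V, ⟪u, v⟫ = 0 → ⟪v, J u⟫ = 0 → ⟪u, u⟫ = 2 → ⟪v, v⟫ = 2 →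
      R u v v u = 4 * ν := fun u v huv hvJu hu hv => by rw [hν u v huv hvJu, hu, hv]; ring
  have hplus : R (x + J y) (J x + y) (J x + y) (x + J y) = 4 * ν := by
    apply hsq <;>
    simp only [map_add, hJ.apply_apply, inner_add_left, inner_add_right, inner_neg_right,
      hJ.inner_apply_apply, hJ.inner_apply_self, hJ.inner_self_apply, hx, hy, hxy, hJxy, hyx, hyJx,
      hxJy, hJyx] <;> norm_num
  have hminus : R (x - J y) (J x - y) (J x - y) (x - J y) = 4 * ν := by
    apply hsq <;>
    simp only [map_sub, hJ.apply_apply, inner_sub_left, inner_sub_right, inner_neg_right,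
      hJ.inner_apply_apply, hJ.inner_apply_self, hJ.inner_self_apply, hx, hy, hxy, hJxy, hyx, hyJx,
      hxJy, hJyx] <;> norm_num
  have hxy' : R x y y x = ν := by rw [hν x y hxy hyJx, hx, hy]; ring
  have hJyJx : R (J y) (J x) (J x) (J y) = ν := by
    rw [hν (J y) (J x) (by rw [hJ.inner_apply_apply, hyx])
      (by rw [hJ.inner_apply_apply, hxJy]),
      hJ.inner_apply_apply, hJ.inner_apply_apply, hx, hy]
    ring
  have hid := hR.sectional_add_add_sectional_sub_sub x (J y) (J x) y
  linarith [hR.pair_comm (J y) y y (J y)]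

theorem six_mul_apply_eq_holomorphic_add_holomorphic (hR : IsCurvatureLike R)
    (hJ : IsOrthogonalComplexStructure J) (hν : HasConstAntiholomorphicCurvature J R ν)
    {x y : V} (hx : ⟪x, x⟫ = 1) (hy : ⟪y, y⟫ = 1) (hxy : ⟪x, y⟫ = 0) (hJxy : ⟪J x, y⟫ = 0) :
    6 * R x y (J y) (J x) = R x (J x) (J x) x + R y (J y) (J y) y - 2 * ν := by
  have hpair := two_mul_eq_holomorphic_add_holomorphic_add hR hJ hν hx hy hxy hJxy
  have hpairJ := two_mul_eq_holomorphic_add_holomorphic_add hR hJ hν hx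
    (by rwa [hJ.inner_apply_apply]) (by rw [hJ.inner_apply_right, hJxy, neg_zero])
    (by rwa [hJ.inner_apply_apply])
  simp only [hJ.apply_apply, map_neg, LinearMap.neg_apply, neg_neg] at hpairJ
  -- replacing `y` by `Jy` turns the mixed term `R x y (J x) (J y)` into `-R x (J y) (J x) y`,
  -- and the Bianchi identity expresses `R x (J x) y (J y)` through these two
  linarith [hR.bianchi x (J x) y (J y), hR.antisymm_right x (J x) (J y) y, hR.pair_comm (J y) y y (J y),
    hR.antisymm_left (J x) y x (J y), hR.antisymm_right y (J x) x (J y), hR.apply_rev y (J x) (J y) x,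
    hR.antisymm_left y x (J x) (J y), hR.antisymm_right x y (J y) (J x)]

theorem six_mul_apply_eq_ricci_of_orthogonal (hR : IsCurvatureLike R)
    (hJ : IsOrthogonalComplexStructure J) (hν : HasConstAntiholomorphicCurvature J R ν)
    (e : OrthonormalBasis ι ℝ V) {x w : V} (hx : ⟪x, x⟫ = 1) (hxw : ⟪x, w⟫ = 0)
    (hJxw : ⟪J x, w⟫ = 0) :
    6 * R x w (J w) (J x) =
      (R x (J x) (J x) x - Fintype.card ι * ν) * ⟪w, w⟫ + ricci e R w w := by
  have h := apply_self_eq_of_norm_eq_one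
    (B₁ := (6 : ℝ) • ((R x).compl₂ J).compr₂ (LinearMap.applyₗ (J x)))
    (B₂ := (R x (J x) (J x) x - Fintype.card ι * ν) • innerₗ V + ricci e R)
    (LinearMap.ker (innerₗ V x) ⊓ LinearMap.ker (innerₗ V (J x))) ?_
    (w := w) (by simp [hxw, hJxw])
  · simpa using h
  intro u hu hu1
  simp only [Submodule.mem_inf, LinearMap.mem_ker, innerₗ_apply_apply] at hu
  have hu1' : ⟪u, u⟫ = 1 := inner_self_eq_one_of_norm_eq_one hu1
  simp only [LinearMap.smul_apply, LinearMap.compr₂_apply, LinearMap.compl₂_apply,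
    LinearMap.applyₗ_apply_apply, LinearMap.add_apply, innerₗ_apply_apply, smul_eq_mul, hu1',
    six_mul_apply_eq_holomorphic_add_holomorphic hR hJ hν hx hu1' hu.1 hu.2,
    ricci_apply_self_of_inner_self_eq_one hR hJ hν e hu1']
  ring

theorem six_mul_starRicci_apply_self_of_inner_self_eq_one (hR : IsCurvatureLike R)
    (hJ : IsOrthogonalComplexStructure J) (hν : HasConstAntiholomorphicCurvature J R ν)
    (e : OrthonormalBasis ι ℝ V) {x : V} (hx : ⟪x, x⟫ = 1) :
    6 * starRicci e J R x x = (Fintype.card ι + 2) * R x (J x) (J x) x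
      + ∑ i, ricci e R (e i) (e i) - (Fintype.card ι + 2) * (Fintype.card ι - 2) * ν := by
  have hJx : ⟪J x, J x⟫ = 1 := by rw [hJ.inner_apply_apply, hx]
  have hxJx := hJ.inner_self_apply x
  set P := projComplPair x (J x)
  have hstar := e.sum_apply_self_eq_sum_projComplPair
    (((R x).compl₂ J).compr₂ (LinearMap.applyₗ (J x))) hx hJx hxJx
  have hricci := e.sum_apply_self_eq_sum_projComplPair (ricci e R) hx hJx hxJx
  have hcompl : ∀ i, 6 * R x (P (e i)) (J (P (e i))) (J x) =
      (R x (J x) (J x) x - Fintype.card ι * ν) * ⟪P (e i), P (e i)⟫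
        + ricci e R (P (e i)) (P (e i)) :=
    fun i => six_mul_apply_eq_ricci_of_orthogonal hR hJ hν e hx
      (inner_projComplPair_left hx hxJx _) (inner_projComplPair_right hJx hxJx _)
  have hholJ : R (J x) (J (J x)) (J (J x)) (J x) = R x (J x) (J x) x := by
    simp only [hJ.apply_apply, map_neg, LinearMap.neg_apply, neg_neg]
    exact hR.pair_comm _ _ _ _
  simp only [LinearMap.compr₂_apply, LinearMap.compl₂_apply, LinearMap.applyₗ_apply_apply,
    hR.apply_self_left, hJ.apply_apply, map_neg] at hstar
  rw [starRicci_apply, hstar, mul_add, mul_add, Finset.mul_sum,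
    Finset.sum_congr rfl fun i _ => hcompl i, Finset.sum_add_distrib, ← Finset.mul_sum,
    e.sum_inner_projComplPair_self hx hJx hxJx, hricci,
    ricci_apply_self_of_inner_self_eq_one hR hJ hν e hx,
    ricci_apply_self_of_inner_self_eq_one hR hJ hν e hJx, hholJ]
  linarith [hR.antisymm_right x (J x) x (J x)]

theorem ricci_combination_eq_mul_inner (hR : IsCurvatureLike R)
    (hJ : IsOrthogonalComplexStructure J)
    (hRJ : ∀ x y z u : V, R x y z u = R (J x) (J y) (J z) (J u))
    (hν : HasConstAntiholomorphicCurvature J R ν) (e : OrthonormalBasis ι ℝ V) (x y : V) :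
    (Fintype.card ι + 2) * ricci e R x y - 6 * starRicci e J R x y =
      (2 * (Fintype.card ι + 2) * (Fintype.card ι - 2) * ν - ∑ i, ricci e R (e i) (e i))
        * ⟪x, y⟫ := by
  refine apply_eq_mul_inner_of_norm_eq_one
    (((Fintype.card ι : ℝ) + 2) • ricci e R - (6 : ℝ) • starRicci e J R) ?_ _ ?_ x y
  · intro x y
    simp only [LinearMap.sub_apply, LinearMap.smul_apply, smul_eq_mul, ricci_comm hR e x,
      starRicci_comm hR hJ hRJ e x]
  · intro u hu
    have hu' : ⟪u, u⟫ = 1 := inner_self_eq_one_of_norm_eq_one hu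
    simp only [LinearMap.sub_apply, LinearMap.smul_apply, smul_eq_mul]
    linear_combination
      ((Fintype.card ι : ℝ) + 2) * ricci_apply_self_of_inner_self_eq_one hR hJ hν e hu'
      - six_mul_starRicci_apply_self_of_inner_self_eq_one hR hJ hν e hu'

end AntiholomorphicCurvature

theorem stmt_2_general {V : Type*} [NormedAddCommGroup V] [InnerProductSpace ℝ V]
    (n : ℕ) (hn : 2 ≤ n)
    (J : V →ₗ[ℝ] V)
    (hJ2 : ∀ x : V, J (J x) = -x)
    (hJorth : ∀ x y : V, ⟪J x, J y⟫ = ⟪x, y⟫)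
    (R : V →ₗ[ℝ] V →ₗ[ℝ] V →ₗ[ℝ] V →ₗ[ℝ] ℝ)
    (hR : IsCurvatureLike R)
    (hRJ : ∀ x y z u : V, R x y z u = R (J x) (J y) (J z) (J u))
    (e : OrthonormalBasis (Fin (2 * n)) ℝ V)
    -- the Ricci tensor, the tensor S', and the scalar curvatures τ, τ'
    (S : V → V → ℝ) (hS : ∀ x y : V, S x y = ∑ i, R x (e i) (e i) y)
    (S' : V → V → ℝ) (hS' : ∀ x y : V, S' x y = ∑ i, R x (e i) (J (e i)) (J y))
    (τ : ℝ) (hτ : τ = ∑ i, S (e i) (e i))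
    (τ' : ℝ) (hτ' : τ' = ∑ i, S' (e i) (e i))
    -- `R` has constant antiholomorphic sectional curvature ν
    (ν : ℝ)
    (hν : ∀ x y : V, ‖x‖ = 1 → ‖y‖ = 1 → ⟪x, y⟫ = 0 → ⟪y, J x⟫ = 0 →
      R x y y x = ν) :
    ∀ x y : V, ((n : ℝ) + 1) * S x y - 3 * S' x y =
      ((((n : ℝ) + 1) * τ - 3 * τ') / (2 * (n : ℝ))) * ⟪x, y⟫ := by
  have hcomb := ricci_combination_eq_mul_inner hR ⟨hJ2, hJorth⟩ hRJ
    (hasConstAntiholomorphicCurvature_of_norm_eq_one hν) e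
  simp only [Fintype.card_fin, Nat.cast_mul, Nat.cast_ofNat] at hcomb
  set c := 2 * (2 * (n : ℝ) + 2) * (2 * n - 2) * ν - ∑ i, ricci e R (e i) (e i)
  have hS_eq : S = fun x y => ricci e R x y := by ext x y; rw [hS, ricci_apply]
  have hS'_eq : S' = fun x y => starRicci e J R x y := by ext x y; rw [hS', starRicci_apply]
  subst hS_eq hS'_eq hτ hτ'
  have htrace : ((n : ℝ) + 1) * (∑ i, ricci e R (e i) (e i))
      - 3 * ∑ i, starRicci e J R (e i) (e i) = n * c := by
    rw [Finset.mul_sum, Finset.mul_sum, ← Finset.sum_sub_distrib]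
    calc _ = ∑ _i : Fin (2 * n), c / 2 := Finset.sum_congr rfl fun i _ => by
          linear_combination (hcomb (e i) (e i)) / 2 + c / 2 * e.inner_eq_one i
      _ = n * c := by
        rw [Finset.sum_const, Finset.card_univ, Fintype.card_fin, nsmul_eq_mul]
        push_cast
        ring
  intro x y
  have hn0 : (n : ℝ) ≠ 0 := by positivity
  rw [htrace]
  field_simp
  linarith [hcomb x y]

theorem stmt_2 {V : Type*} [NormedAddCommGroup V] [InnerProductSpace ℝ V]
    [FiniteDimensional ℝ V] (n : ℕ) (hn : 2 ≤ n)
    (hdim : Module.finrank ℝ V = 2 * n)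
    (J : V →ₗ[ℝ] V)
    (hJ2 : ∀ x : V, J (J x) = -x)
    (hJorth : ∀ x y : V, ⟪J x, J y⟫ = ⟪x, y⟫)
    (R : V →ₗ[ℝ] V →ₗ[ℝ] V →ₗ[ℝ] V →ₗ[ℝ] ℝ)
    (hR : IsCurvatureLike R)
    (hRJ : ∀ x y z u : V, R x y z u = R (J x) (J y) (J z) (J u))
    (e : OrthonormalBasis (Fin (2 * n)) ℝ V)
    -- the Ricci tensor, the tensor S', and the scalar curvatures τ, τ'
    (S : V → V → ℝ) (hS : ∀ x y : V, S x y = ∑ i, R x (e i) (e i) y)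
    (S' : V → V → ℝ) (hS' : ∀ x y : V, S' x y = ∑ i, R x (e i) (J (e i)) (J y))
    (τ : ℝ) (hτ : τ = ∑ i, S (e i) (e i))
    (τ' : ℝ) (hτ' : τ' = ∑ i, S' (e i) (e i))
    -- `R` has constant antiholomorphic sectional curvature ν
    (ν : ℝ)
    (hν : ∀ x y : V, ‖x‖ = 1 → ‖y‖ = 1 → ⟪x, y⟫ = 0 → ⟪y, J x⟫ = 0 →
      R x y y x = ν) :
    ∀ x y : V, ((n : ℝ) + 1) * S x y - 3 * S' x y =
      ((((n : ℝ) + 1) * τ - 3 * τ') / (2 * (n : ℝ))) * ⟪x, y⟫ :=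
  stmt_2_general n hn J hJ2 hJorth R hR hRJ e S hS S' hS' τ hτ τ' hτ' ν hν
end

section
/- Let V be a real inner product space of dimension 2n (n ≥ 2) with an orthogonal complex structure J, and let R be a curvature-like tensor on V satisfying R(x,y,z,u) = R(Jx,Jy,Jz,Ju) for all x, y, z, u. If R has constant antiholomorphic sectional curvature ν, then R satisfies the identity R(x,y,z,u) = R(x,y,Jz,Ju) + R(x,Jy,z,Ju) + R(Jx,y,z,Ju) for all x, y, z, u ∈ V. -/
/-!
Let `R₀(x,y,z,u) = ⟪x,u⟫⟪y,z⟫ - ⟪x,z⟫⟪y,u⟫`. The identity is linear in the tensor and holds for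
`R₀`, so it suffices to prove it for `S = R - ν R₀`, a `J`-invariant curvature-like tensor that
vanishes on antiholomorphic planes. Its defect
`T(x,y,z,u) = S(x,y,z,u) - S(x,y,Jz,Ju) - S(x,Jy,z,Ju) - S(Jx,y,z,Ju)` is again curvature-like and
changes sign under `(z,u) ↦ (Jz,Ju)`, so `T(a,b,z,Jz) = 0`. Writing `y = a x + b Jx + p` with `p`
orthogonal to `x` and `Jx`, this reduces `T(x,y,y,x)` to `T(x,p,p,x)`. That vanishes because
`S(x,p,p,x) = S(Jx,p,p,Jx) = 0`, and polarizing `S(x + Jx, ·, ·, x + Jx)` on the orthogonal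
complement of `x` and `Jx` gives `S(x,p,Jp,Jx) + S(x,Jp,p,Jx) = 0`. A curvature-like tensor with
vanishing sectional curvature is zero, so `T = 0`.
-/

open scoped RealInnerProductSpace

namespace LinearMap

variable {R M : Type*} [CommRing R] [AddCommGroup M] [Module R M]

def compl₁₂₃₄ (f : M →ₗ[R] M →ₗ[R] M →ₗ[R] M →ₗ[R] R) (A B C D : M →ₗ[R] M) :
    M →ₗ[R] M →ₗ[R] M →ₗ[R] M →ₗ[R] R :=
  (f.compl₁₂ A B).compr₂
    (llcomp R M (M →ₗ[R] R) (M →ₗ[R] R) (lcomp R R D) ∘ₗ lcomp R (M →ₗ[R] R) C)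

@[simp]
theorem compl₁₂₃₄_apply (f : M →ₗ[R] M →ₗ[R] M →ₗ[R] M →ₗ[R] R) (A B C D : M →ₗ[R] M)
    (x y z u : M) : f.compl₁₂₃₄ A B C D x y z u = f (A x) (B y) (C z) (D u) :=
  rfl

end LinearMap

section

variable {V : Type*} [NormedAddCommGroup V] [InnerProductSpace ℝ V]

theorem exists_eq_smul_add_smul_add_of_inner_eq_zero (v w y : V) :
    ∃ (a b : ℝ) (p : V), ⟪v, p⟫ = 0 ∧ ⟪w, p⟫ = 0 ∧ y = a • v + b • w + p := by
  let K := Submodule.span ℝ {v, w}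
  have : FiniteDimensional ℝ K := FiniteDimensional.span_of_finite ℝ (Set.toFinite _)
  obtain ⟨a, b, hab⟩ := Submodule.mem_span_pair.1 (K.starProjection_apply_mem y)
  have hp := K.sub_starProjection_mem_orthogonal y
  refine ⟨a, b, y - K.starProjection y, ?_, ?_, by rw [hab]; abel⟩
  · exact Submodule.inner_right_of_mem_orthogonal (Submodule.subset_span (by simp)) hp
  · exact Submodule.inner_right_of_mem_orthogonal (Submodule.subset_span (by simp)) hp

theorem inner_map_left_eq_neg {J : V →ₗ[ℝ] V} (hJ2 : ∀ x, J (J x) = -x)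
    (hJorth : ∀ x y : V, ⟪J x, J y⟫ = ⟪x, y⟫) (x y : V) : ⟪J x, y⟫ = -⟪x, J y⟫ := by
  rw [← hJorth x (J y), hJ2, inner_neg_right, neg_neg]

theorem apply_self_eq_of_antiholomorphic {J : V →ₗ[ℝ] V}
    {R : V →ₗ[ℝ] V →ₗ[ℝ] V →ₗ[ℝ] V →ₗ[ℝ] ℝ} {ν : ℝ}
    (hν : ∀ x y : V, ‖x‖ = 1 → ‖y‖ = 1 → ⟪x, y⟫ = 0 → ⟪y, J x⟫ = 0 → R x y y x = ν)
    {x y : V} (hxy : ⟪x, y⟫ = 0) (hyJx : ⟪y, J x⟫ = 0) :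
    R x y y x = ν * (‖x‖ ^ 2 * ‖y‖ ^ 2) := by
  rcases eq_or_ne x 0 with rfl | hx
  · simp
  rcases eq_or_ne y 0 with rfl | hy
  · simp
  have h := hν (‖x‖⁻¹ • x) (‖y‖⁻¹ • y) (norm_smul_inv_norm hx) (norm_smul_inv_norm hy)
    (by simp [real_inner_smul_left, real_inner_smul_right, hxy])
    (by simp [real_inner_smul_left, real_inner_smul_right, hyJx])
  simp only [map_smul, LinearMap.smul_apply, smul_eq_mul] at h
  field_simp at h
  linear_combination h

namespace IsCurvatureLike

variable {S T : V →ₗ[ℝ] V →ₗ[ℝ] V →ₗ[ℝ] V →ₗ[ℝ] ℝ}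

theorem add (hS : IsCurvatureLike S) (hT : IsCurvatureLike T) : IsCurvatureLike (S + T) := by
  obtain ⟨hS1, hS2, hS3, hS4⟩ := hS
  obtain ⟨hT1, hT2, hT3, hT4⟩ := hT
  refine ⟨fun x y z u => ?_, fun x y z u => ?_, fun x y z u => ?_, fun x y z u => ?_⟩ <;>
    simp only [LinearMap.add_apply]
  · rw [hS1 x y z u, hT1 x y z u]; ring
  · rw [hS2 x y z u, hT2 x y z u]; ring
  · rw [hS3 x y z u, hT3 x y z u]
  · linear_combination hS4 x y z u + hT4 x y z u

theorem smul (hS : IsCurvatureLike S) (c : ℝ) : IsCurvatureLike (c • S) := by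
  obtain ⟨hS1, hS2, hS3, hS4⟩ := hS
  refine ⟨fun x y z u => ?_, fun x y z u => ?_, fun x y z u => ?_, fun x y z u => ?_⟩ <;>
    simp only [LinearMap.smul_apply, smul_eq_mul]
  · rw [hS1 x y z u]; ring
  · rw [hS2 x y z u]; ring
  · rw [hS3 x y z u]
  · linear_combination c * hS4 x y z u

theorem apply_comm_middle (hS : IsCurvatureLike S) (x y z : V) : S x y z x = S x z y x := by
  obtain ⟨h1, h2, h3, -⟩ := hS
  linarith [h3 x z y x, h1 y x x z, h2 x y x z]

theorem apply_eq_zero_of_apply_add_self (hS : IsCurvatureLike S) {x y z : V}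
    (hy : S x y y x = 0) (hz : S x z z x = 0) (hyz : S x (y + z) (y + z) x = 0) :
    S x y z x = 0 := by
  simp only [map_add, LinearMap.add_apply] at hyz
  linarith [hS.apply_comm_middle x y z]

theorem eq_zero_of_apply_self (hS : IsCurvatureLike S) (h : ∀ x y, S x y y x = 0) : S = 0 := by
  have hxyzx (x y z : V) : S x y z x = 0 :=
    hS.apply_eq_zero_of_apply_add_self (h x y) (h x z) (h x (y + z))
  obtain ⟨h1, h2, h3, h4⟩ := hS
  have hswap (x y z u : V) : S x y z u = -S u y z x := by
    have := hxyzx (x + u) y z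
    simp only [map_add, LinearMap.add_apply, hxyzx] at this
    linarith
  have hmiddle (x y z u : V) : S x y z u = -S x z y u := by
    linarith [hswap x y z u, h3 u y z x, h1 z x u y, h2 x z u y]
  ext x y z u
  simp only [LinearMap.zero_apply]
  linarith [h4 x y z u, h1 y z x u, hmiddle z y x u, h1 z x y u, hmiddle x y z u]

theorem apply_map_eq_zero {J : V →ₗ[ℝ] V} (hJ2 : ∀ x, J (J x) = -x) (hS : IsCurvatureLike S)
    (hSJ : ∀ x y z u : V, S x y (J z) (J u) = -S x y z u) (x y z : V) : S x y z (J z) = 0 := by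
  have h := hSJ x y z (J z)
  rw [hJ2, map_neg, ← hS.2.1 x y z (J z)] at h
  linarith

end IsCurvatureLike

section Antiholomorphic

variable {J : V →ₗ[ℝ] V} {S : V →ₗ[ℝ] V →ₗ[ℝ] V →ₗ[ℝ] V →ₗ[ℝ] ℝ}

theorem apply_eq_zero_of_antiholomorphic (hS : IsCurvatureLike S)
    (hA : ∀ x y : V, ⟪x, y⟫ = 0 → ⟪J x, y⟫ = 0 → S x y y x = 0) {x y z : V}
    (hy : ⟪x, y⟫ = 0) (hJy : ⟪J x, y⟫ = 0) (hz : ⟪x, z⟫ = 0) (hJz : ⟪J x, z⟫ = 0) :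
    S x y z x = 0 :=
  hS.apply_eq_zero_of_apply_add_self (hA x y hy hJy) (hA x z hz hJz)
    (hA x (y + z) (by rw [inner_add_right, hy, hz, add_zero])
      (by rw [inner_add_right, hJy, hJz, add_zero]))

theorem apply_map_add_apply_map_eq_zero (hJ2 : ∀ x, J (J x) = -x) (hS : IsCurvatureLike S)
    (hA : ∀ x y : V, ⟪x, y⟫ = 0 → ⟪J x, y⟫ = 0 → S x y y x = 0) {x y z : V}
    (hy : ⟪x, y⟫ = 0) (hJy : ⟪J x, y⟫ = 0) (hz : ⟪x, z⟫ = 0) (hJz : ⟪J x, z⟫ = 0) :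
    S x y z (J x) + S x z y (J x) = 0 := by
  have hJJy : ⟪J (J x), y⟫ = 0 := by rw [hJ2, inner_neg_left, hy, neg_zero]
  have hJJz : ⟪J (J x), z⟫ = 0 := by rw [hJ2, inner_neg_left, hz, neg_zero]
  have hsum := apply_eq_zero_of_antiholomorphic (x := x + J x) hS hA
    (by rw [inner_add_left, hy, hJy, add_zero])
    (by rw [map_add, inner_add_left, hJy, hJJy, add_zero])
    (by rw [inner_add_left, hz, hJz, add_zero])
    (by rw [map_add, inner_add_left, hJz, hJJz, add_zero])
  simp only [map_add, LinearMap.add_apply] at hsum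
  have hx := apply_eq_zero_of_antiholomorphic hS hA hy hJy hz hJz
  have hJx := apply_eq_zero_of_antiholomorphic hS hA hJy hJJy hJz hJJz
  obtain ⟨h1, h2, h3, -⟩ := hS
  linarith [h3 (J x) y z x, h1 z x (J x) y, h2 x z (J x) y]

def jDefect (J : V →ₗ[ℝ] V) (S : V →ₗ[ℝ] V →ₗ[ℝ] V →ₗ[ℝ] V →ₗ[ℝ] ℝ) :
    V →ₗ[ℝ] V →ₗ[ℝ] V →ₗ[ℝ] V →ₗ[ℝ] ℝ :=
  S + S.compl₁₂₃₄ .id .id J (-J) + S.compl₁₂₃₄ .id J .id (-J) + S.compl₁₂₃₄ J .id .id (-J)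

@[simp]
theorem jDefect_apply (J : V →ₗ[ℝ] V) (S : V →ₗ[ℝ] V →ₗ[ℝ] V →ₗ[ℝ] V →ₗ[ℝ] ℝ) (x y z u : V) :
    jDefect J S x y z u =
      S x y z u - S x y (J z) (J u) - S x (J y) z (J u) - S (J x) y z (J u) := by
  simp [jDefect, sub_eq_add_neg]

theorem map_map_apply_apply_eq (hJ2 : ∀ x, J (J x) = -x)
    (hSJ : ∀ x y z u : V, S x y z u = S (J x) (J y) (J z) (J u)) (a b c d : V) :
    S (J a) (J b) c d = S a b (J c) (J d) := by
  simp [hSJ a b (J c) (J d), hJ2]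

theorem map_apply_map_apply_eq (hJ2 : ∀ x, J (J x) = -x)
    (hSJ : ∀ x y z u : V, S x y z u = S (J x) (J y) (J z) (J u)) (a b c d : V) :
    S (J a) b (J c) d = S a (J b) c (J d) := by
  simp [hSJ a (J b) c (J d), hJ2]

theorem map_apply_apply_map_eq (hJ2 : ∀ x, J (J x) = -x)
    (hSJ : ∀ x y z u : V, S x y z u = S (J x) (J y) (J z) (J u)) (a b c d : V) :
    S (J a) b c (J d) = S a (J b) (J c) d := by
  simp [hSJ a (J b) (J c) d, hJ2]

theorem isCurvatureLike_jDefect (hJ2 : ∀ x, J (J x) = -x) (hS : IsCurvatureLike S)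
    (hSJ : ∀ x y z u : V, S x y z u = S (J x) (J y) (J z) (J u)) :
    IsCurvatureLike (jDefect J S) := by
  obtain ⟨h1, h2, h3, h4⟩ := hS
  have hJ12 := map_map_apply_apply_eq hJ2 hSJ
  have hJ14 := map_apply_apply_map_eq hJ2 hSJ
  refine ⟨fun x y z u => ?_, fun x y z u => ?_, fun x y z u => ?_, fun x y z u => ?_⟩ <;>
    simp only [jDefect_apply]
  · linarith [h1 x y z u, h1 x y (J z) (J u), h1 y (J x) z (J u), h1 (J y) x z (J u)]
  · linarith [h2 x y z u, h2 x y (J z) (J u), h2 x (J y) (J z) u, h2 x (J y) (J u) z,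
      hJ14 x y z u, hJ14 x y u z]
  · linarith [h3 x y z u, h3 z u (J x) (J y), hJ12 x y z u, h3 z (J u) x (J y),
      h3 (J z) u x (J y), hJ14 x y z u]
  · linear_combination h4 x y z u - h4 x y (J z) (J u) - h4 y z (J x) (J u) - h4 z x (J y) (J u)

theorem jDefect_apply_map_map (hJ2 : ∀ x, J (J x) = -x)
    (hSJ : ∀ x y z u : V, S x y z u = S (J x) (J y) (J z) (J u)) (x y z u : V) :
    jDefect J S x y (J z) (J u) = -jDefect J S x y z u := by
  simp only [jDefect_apply, hJ2, map_neg, LinearMap.neg_apply]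
  rw [map_apply_map_apply_eq hJ2 hSJ, ← map_apply_apply_map_eq hJ2 hSJ]
  ring

theorem jDefect_apply_self_of_antiholomorphic (hJ2 : ∀ x, J (J x) = -x)
    (hJorth : ∀ x y : V, ⟪J x, J y⟫ = ⟪x, y⟫) (hS : IsCurvatureLike S)
    (hA : ∀ x y : V, ⟪x, y⟫ = 0 → ⟪J x, y⟫ = 0 → S x y y x = 0) {x p : V}
    (hp : ⟪x, p⟫ = 0) (hJp : ⟪J x, p⟫ = 0) : jDefect J S x p p x = 0 := by
  have hpJ : ⟪x, J p⟫ = 0 := by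
    rw [← neg_eq_zero, ← inner_map_left_eq_neg hJ2 hJorth, hJp]
  have hJpJ : ⟪J x, J p⟫ = 0 := by rw [hJorth, hp]
  have hJJp : ⟪J (J x), p⟫ = 0 := by rw [hJ2, inner_neg_left, hp, neg_zero]
  have hsum := apply_map_add_apply_map_eq_zero hJ2 hS hA hp hJp hpJ hJpJ
  rw [jDefect_apply, hA x p hp hJp, hA (J x) p hJp hJJp]
  linarith

theorem jDefect_apply_self (hJ2 : ∀ x, J (J x) = -x)
    (hJorth : ∀ x y : V, ⟪J x, J y⟫ = ⟪x, y⟫) (hS : IsCurvatureLike S)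
    (hSJ : ∀ x y z u : V, S x y z u = S (J x) (J y) (J z) (J u))
    (hA : ∀ x y : V, ⟪x, y⟫ = 0 → ⟪J x, y⟫ = 0 → S x y y x = 0) (x y : V) :
    jDefect J S x y y x = 0 := by
  obtain ⟨a, b, p, hp, hJp, rfl⟩ := exists_eq_smul_add_smul_add_of_inner_eq_zero x (J x) y
  have hT := isCurvatureLike_jDefect hJ2 hS hSJ
  have hTJ := hT.apply_map_eq_zero hJ2 (jDefect_apply_map_map hJ2 hSJ)
  have hleft (z u : V) : jDefect J S x x z u = 0 := by linarith [hT.1 x x z u]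
  have hright (w v z : V) : jDefect J S w v z z = 0 := by linarith [hT.2.1 w v z z]
  have hJxJx : jDefect J S x (J x) (J x) x = 0 := by rw [hT.2.2.1, hTJ]
  have hJxp : jDefect J S x (J x) p x = 0 := by rw [hT.2.2.1, hTJ]
  have hpJx : jDefect J S x p (J x) x = 0 := by rw [hT.apply_comm_middle, hJxp]
  simp only [map_add, map_smul, LinearMap.add_apply, LinearMap.smul_apply, smul_eq_mul, hleft,
    hright, hJxJx, hJxp, hpJx, jDefect_apply_self_of_antiholomorphic hJ2 hJorth hS hA hp hJp]
  ring

theorem jDefect_eq_zero (hJ2 : ∀ x, J (J x) = -x) (hJorth : ∀ x y : V, ⟪J x, J y⟫ = ⟪x, y⟫)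
    (hS : IsCurvatureLike S) (hSJ : ∀ x y z u : V, S x y z u = S (J x) (J y) (J z) (J u))
    (hA : ∀ x y : V, ⟪x, y⟫ = 0 → ⟪J x, y⟫ = 0 → S x y y x = 0) : jDefect J S = 0 :=
  (isCurvatureLike_jDefect hJ2 hS hSJ).eq_zero_of_apply_self
    (jDefect_apply_self hJ2 hJorth hS hSJ hA)

end Antiholomorphic

variable (V) in
noncomputable def constCurvTensor : V →ₗ[ℝ] V →ₗ[ℝ] V →ₗ[ℝ] V →ₗ[ℝ] ℝ :=
  LinearMap.mk₂ ℝ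
    (fun x y => LinearMap.mk₂ ℝ (fun z u => ⟪x, u⟫ * ⟪y, z⟫ - ⟪x, z⟫ * ⟪y, u⟫)
      (fun _ _ _ => by simp only [inner_add_right]; ring)
      (fun _ _ _ => by simp only [real_inner_smul_right, smul_eq_mul]; ring)
      (fun _ _ _ => by simp only [inner_add_right]; ring)
      (fun _ _ _ => by simp only [real_inner_smul_right, smul_eq_mul]; ring))
    (fun _ _ _ => by ext; simp [inner_add_left]; ring)
    (fun _ _ _ => by ext; simp [real_inner_smul_left]; ring)
    (fun _ _ _ => by ext; simp [inner_add_left]; ring)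
    (fun _ _ _ => by ext; simp [real_inner_smul_left]; ring)

@[simp]
theorem constCurvTensor_apply (x y z u : V) :
    constCurvTensor V x y z u = ⟪x, u⟫ * ⟪y, z⟫ - ⟪x, z⟫ * ⟪y, u⟫ :=
  rfl

theorem isCurvatureLike_constCurvTensor : IsCurvatureLike (constCurvTensor V) := by
  refine ⟨fun x y z u => ?_, fun x y z u => ?_, fun x y z u => ?_, fun x y z u => ?_⟩ <;>
    simp only [constCurvTensor_apply] <;> grind [real_inner_comm]

theorem constCurvTensor_apply_map {J : V →ₗ[ℝ] V} (hJorth : ∀ x y : V, ⟪J x, J y⟫ = ⟪x, y⟫)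
    (x y z u : V) : constCurvTensor V (J x) (J y) (J z) (J u) = constCurvTensor V x y z u := by
  simp only [constCurvTensor_apply, hJorth]

theorem jDefect_constCurvTensor {J : V →ₗ[ℝ] V} (hJ2 : ∀ x, J (J x) = -x)
    (hJorth : ∀ x y : V, ⟪J x, J y⟫ = ⟪x, y⟫) : jDefect J (constCurvTensor V) = 0 := by
  ext x y z u
  simp only [jDefect_apply, constCurvTensor_apply, hJorth, inner_map_left_eq_neg hJ2 hJorth,
    LinearMap.zero_apply]
  ring

end

theorem stmt_4_general {V : Type*} [NormedAddCommGroup V] [InnerProductSpace ℝ V]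
    (J : V →ₗ[ℝ] V)
    (hJ2 : ∀ x : V, J (J x) = -x)
    (hJorth : ∀ x y : V, ⟪J x, J y⟫ = ⟪x, y⟫)
    (R : V →ₗ[ℝ] V →ₗ[ℝ] V →ₗ[ℝ] V →ₗ[ℝ] ℝ)
    (hR : IsCurvatureLike R)
    (hRJ : ∀ x y z u : V, R x y z u = R (J x) (J y) (J z) (J u))
    -- `R` has constant antiholomorphic sectional curvature ν
    (ν : ℝ)
    (hν : ∀ x y : V, ‖x‖ = 1 → ‖y‖ = 1 → ⟪x, y⟫ = 0 → ⟪y, J x⟫ = 0 →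
      R x y y x = ν) :
    ∀ x y z u : V,
      R x y z u = R x y (J z) (J u) + R x (J y) z (J u) + R (J x) y z (J u) := by
  set S := R + (-ν) • constCurvTensor V
  have hS : IsCurvatureLike S := hR.add (isCurvatureLike_constCurvTensor.smul (-ν))
  have hSJ (x y z u : V) : S x y z u = S (J x) (J y) (J z) (J u) := by
    simp only [S, LinearMap.add_apply, LinearMap.smul_apply, constCurvTensor_apply_map hJorth,
      ← hRJ]
  have hA (x y : V) (hxy : ⟪x, y⟫ = 0) (hJxy : ⟪J x, y⟫ = 0) : S x y y x = 0 := by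
    have hRxy := apply_self_eq_of_antiholomorphic hν hxy (by rwa [real_inner_comm])
    simp only [S, LinearMap.add_apply, LinearMap.smul_apply, smul_eq_mul, constCurvTensor_apply,
      hRxy, hxy, real_inner_self_eq_norm_sq]
    ring
  intro x y z u
  have hS0 := congr($(jDefect_eq_zero hJ2 hJorth hS hSJ hA) x y z u)
  have hR0 := congr($(jDefect_constCurvTensor hJ2 hJorth) x y z u)
  simp only [jDefect_apply, S, LinearMap.add_apply, LinearMap.smul_apply, smul_eq_mul,
    LinearMap.zero_apply] at hS0 hR0
  linear_combination hS0 + ν * hR0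

theorem stmt_4 {V : Type*} [NormedAddCommGroup V] [InnerProductSpace ℝ V]
    [FiniteDimensional ℝ V] (n : ℕ) (hn : 2 ≤ n)
    (hdim : Module.finrank ℝ V = 2 * n)
    (J : V →ₗ[ℝ] V)
    (hJ2 : ∀ x : V, J (J x) = -x)
    (hJorth : ∀ x y : V, ⟪J x, J y⟫ = ⟪x, y⟫)
    (R : V →ₗ[ℝ] V →ₗ[ℝ] V →ₗ[ℝ] V →ₗ[ℝ] ℝ)
    (hR : IsCurvatureLike R)
    (hRJ : ∀ x y z u : V, R x y z u = R (J x) (J y) (J z) (J u))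
    -- `R` has constant antiholomorphic sectional curvature ν
    (ν : ℝ)
    (hν : ∀ x y : V, ‖x‖ = 1 → ‖y‖ = 1 → ⟪x, y⟫ = 0 → ⟪y, J x⟫ = 0 →
      R x y y x = ν) :
    ∀ x y z u : V,
      R x y z u = R x y (J z) (J u) + R x (J y) z (J u) + R (J x) y z (J u) :=
  stmt_4_general J hJ2 hJorth R hR hRJ ν hν
end
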